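/- arXiv:2102.11270 — 9 statements merged into one kernel-verified Lean document; each statement's English description precedes it below -/
import Mathlib

section
/- Let (x_t)_{t≥0} be a sequence of positive real numbers that is nonincreasing, i.e., x_t ≤ x_{t−1} for all t ≥ 1. Suppose there exists a real number c_l > 0 with c_l·x_0 ≤ 1/2 such that x_t ≥ x_{t−1} − c_l·x_{t−1}² for all t ≥ 1. Then x_t ≥ 1/(2·c_l·t + 1/x_0) for all t ≥ 0. -/
/-- **Part (i) of the recursive-sequence lemma.**
A positive nonincreasing sequence with at-most-quadratic decrements
`x t ≥ x (t-1) - c_l · x (t-1)²` (where `c_l · x 0 ≤ 1/2`) satisfies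
`x t ≥ 1 / (2 c_l t + 1 / x 0)` for all `t`. -/
theorem recursive_sequence_lower_bound
    (x : ℕ → ℝ) (hpos : ∀ t, 0 < x t)
    (hmono : ∀ t : ℕ, 1 ≤ t → x t ≤ x (t - 1))
    (cl : ℝ) (hcl : 0 < cl) (hcl0 : cl * x 0 ≤ 1 / 2)
    (hrec : ∀ t : ℕ, 1 ≤ t → x (t - 1) - cl * x (t - 1) ^ 2 ≤ x t) :
    ∀ t : ℕ, 1 / (2 * cl * t + 1 / x 0) ≤ x t := by
  have hx0 : 0 < x 0 := hpos 0
  -- all terms bounded by x 0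
  have hbound : ∀ t : ℕ, x t ≤ x 0 := by
    intro t
    induction t with
    | zero => exact le_refl (x 0)
    | succ n ih =>
      have := hmono (n + 1) (Nat.le_add_left 1 n)
      simpa using this.trans ih
  intro t
  induction t with
  | zero =>
    simp [one_div, inv_inv]
  | succ n ih =>
    have hxn := hpos n
    have hxn1 := hpos (n + 1)
    have hrecn := hrec (n + 1) (Nat.le_add_left 1 n)
    simp only [Nat.add_sub_cancel] at hrecn
    have hsmall : cl * x n ≤ 1 / 2 := le_trans
      (by nlinarith [hbound n]) hcl0
    -- key: 1 / x (n+1) ≤ 1 / x n + 2 * cl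
    have key : x n ≤ x (n + 1) * (1 + 2 * cl * x n) := by
      nlinarith [mul_le_mul_of_nonneg_right hrecn
          (show (0:ℝ) ≤ 1 + 2 * cl * x n by positivity),
        mul_nonneg (mul_nonneg hcl.le (sq_nonneg (x n)))
          (by linarith : (0:ℝ) ≤ 1 - 2 * (cl * x n))]
    have hden : 0 < 2 * cl * (n : ℝ) + 1 / x 0 := by
      have : 0 ≤ 2 * cl * (n : ℝ) := by positivity
      have := one_div_pos.mpr hx0
      linarith
    have hden1 : 0 < 2 * cl * ((n : ℝ) + 1) + 1 / x 0 := by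
      nlinarith
    -- from ih : 1 / x n ≤ 2 cl n + 1/x0
    have hinv : 1 / x n ≤ 2 * cl * (n : ℝ) + 1 / x 0 := (one_div_le hxn hden).mpr ih
    have hinv1 : 1 / x (n + 1) ≤ 2 * cl * ((n : ℝ) + 1) + 1 / x 0 := by
      have h1 : 1 / x (n + 1) ≤ 1 / x n + 2 * cl := by
        rw [div_le_iff₀ hxn1]
        have : (1 / x n + 2 * cl) * x (n + 1) * x n ≥ x n := by
          have expand : (1 / x n + 2 * cl) * x (n + 1) * x n
              = x (n + 1) * (1 + 2 * cl * x n) := by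
            field_simp
          rw [expand]; exact key
        nlinarith
      linarith
    push_cast
    exact (one_div_le hden1 hxn1).mpr hinv1
end

section
/- Let (x_t)_{t≥0} be a sequence of real numbers, let c_x > 0 and c_− > 0 be real numbers, and let t_0 be a natural number. Suppose x_0 > 0, that 0 < x_t < c_x for all t < t_0, that x_{t_0} ≥ c_x, and that x_t ≥ x_{t−1} + c_−·x_{t−1}² for all t with 1 ≤ t ≤ t_0. Then t_0 ≤ (1 + c_−·c_x)/(c_−·x_0). -/
/-!
Pass to reciprocals: `x_{t+1} ≥ x_t (1 + c₋ x_t)` gives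
`1 / x_{t+1} ≤ 1 / x_t - c₋ / (1 + c₋ x_t) ≤ 1 / x_t - c₋ / (1 + c₋ c_x)` while `x_t < c_x`,
so `1 / x_t` drops by at least `c₋ / (1 + c₋ c_x)` per step before the crossing. Since it starts
at `1 / x_0` and stays positive, there are at most `(1 + c₋ c_x) / (c₋ x_0)` steps.
-/

theorem nsmul_add_le_of_forall_succ_add_le {α : Type*} [AddCommMonoid α] [Preorder α]
    [IsOrderedAddMonoid α] {y : ℕ → α} {d : α} {n : ℕ}
    (h : ∀ t < n, y (t + 1) + d ≤ y t) : n • d + y n ≤ y 0 := by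
  induction n with
  | zero => simp
  | succ n ih =>
    calc (n + 1) • d + y (n + 1) = n • d + (y (n + 1) + d) := by rw [succ_nsmul]; abel
      _ ≤ n • d + y n := by gcongr; exact h n n.lt_succ_self
      _ ≤ y 0 := ih fun t ht => h t (ht.trans n.lt_succ_self)

theorem inv_add_div_le_inv_of_add_mul_sq_le {a b c M : ℝ} (ha : 0 < a) (haM : a ≤ M)
    (hc : 0 ≤ c) (hab : a + c * a ^ 2 ≤ b) : b⁻¹ + c / (1 + c * M) ≤ a⁻¹ := by
  have hca : 0 < 1 + c * a := by positivity
  have hb : a * (1 + c * a) ≤ b := by linarith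
  calc b⁻¹ + c / (1 + c * M) ≤ (a * (1 + c * a))⁻¹ + c / (1 + c * a) := by
        gcongr
      _ = a⁻¹ := by field_simp

theorem crossing_time_upper_bound_general
    (x : ℕ → ℝ) (cx cm : ℝ) (hcx : 0 < cx) (hcm : 0 < cm) (t₀ : ℕ)
    (hbefore : ∀ t : ℕ, t < t₀ → 0 < x t ∧ x t < cx)
    (hcross : cx ≤ x t₀)
    (hrec : ∀ t : ℕ, 1 ≤ t → t ≤ t₀ → x (t - 1) + cm * x (t - 1) ^ 2 ≤ x t) :
    (t₀ : ℝ) ≤ (1 + cm * cx) / (cm * x 0) := by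
  have hdecrease : ∀ t < t₀, (x (t + 1))⁻¹ + cm / (1 + cm * cx) ≤ (x t)⁻¹ := fun t ht =>
    inv_add_div_le_inv_of_add_mul_sq_le (hbefore t ht).1 (hbefore t ht).2.le hcm.le
      (by simpa using hrec (t + 1) t.succ_pos ht)
  have htelescope := nsmul_add_le_of_forall_succ_add_le (y := fun t => (x t)⁻¹) hdecrease
  have hlast : 0 < (x t₀)⁻¹ := inv_pos.2 (hcx.trans_le hcross)
  rw [nsmul_eq_mul] at htelescope
  have hsteps : (t₀ : ℝ) * (cm / (1 + cm * cx)) ≤ (x 0)⁻¹ := by linarith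
  calc (t₀ : ℝ) = t₀ * (cm / (1 + cm * cx)) * ((1 + cm * cx) / cm) := by field_simp
    _ ≤ (x 0)⁻¹ * ((1 + cm * cx) / cm) := by gcongr
    _ = (1 + cm * cx) / (cm * x 0) := by ring

/-- **Part (iii) of the recursive-sequence lemma: crossing-time upper bound.**
If `0 < x t < c_x` for all `t < t₀`, `x t₀ ≥ c_x`, and the increments are at
least quadratic, `x t ≥ x (t-1) + c₋ · x (t-1)²` for `1 ≤ t ≤ t₀`, then
`t₀ ≤ (1 + c₋ c_x) / (c₋ x 0)`. -/
theorem crossing_time_upper_bound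
    (x : ℕ → ℝ) (cx cm : ℝ) (hcx : 0 < cx) (hcm : 0 < cm) (t₀ : ℕ)
    (hx0 : 0 < x 0)
    (hbefore : ∀ t : ℕ, t < t₀ → 0 < x t ∧ x t < cx)
    (hcross : cx ≤ x t₀)
    (hrec : ∀ t : ℕ, 1 ≤ t → t ≤ t₀ → x (t - 1) + cm * x (t - 1) ^ 2 ≤ x t) :
    (t₀ : ℝ) ≤ (1 + cm * cx) / (cm * x 0) :=
  crossing_time_upper_bound_general x cx cm hcx hcm t₀ hbefore hcross hrec
end

section
/- Let (x_t)_{t≥0} be a sequence of real numbers, let c_+ > 0 be a real number, and let t_0 be a natural number. Suppose x_0 > 0, x_{t_0} > 0, and 0 ≤ x_t ≤ x_{t−1} + c_+·x_{t−1}² for all t with 1 ≤ t ≤ t_0. Then t_0 ≥ (1/x_0 − 1/x_{t_0})/c_+. -/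
/-- **Part (iv) of the recursive-sequence lemma: crossing-time lower bound.**
If `x 0 > 0`, `x t₀ > 0`, and `0 ≤ x t ≤ x (t-1) + c₊ · x (t-1)²` for all
`1 ≤ t ≤ t₀`, then `t₀ ≥ (1 / x 0 - 1 / x t₀) / c₊`. -/
theorem crossing_time_lower_bound
    (x : ℕ → ℝ) (cp : ℝ) (hcp : 0 < cp) (t₀ : ℕ)
    (hx0 : 0 < x 0) (hxt0 : 0 < x t₀)
    (hrec : ∀ t : ℕ, 1 ≤ t → t ≤ t₀ →
      0 ≤ x t ∧ x t ≤ x (t - 1) + cp * x (t - 1) ^ 2) :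
    (1 / x 0 - 1 / x t₀) / cp ≤ (t₀ : ℝ) := by
  -- if x t = 0 for some t ≤ t₀ then x t₀ = 0, forward propagation
  have zero_prop : ∀ t, t ≤ t₀ → x t = 0 → x t₀ = 0 := by
    intro t ht h0
    have key : ∀ k, t + k ≤ t₀ → x (t + k) = 0 := by
      intro k
      induction k with
      | zero => intro _; simpa using h0
      | succ n ih =>
        intro hle
        have hle' : t + n ≤ t₀ := by omega
        have hxn : x (t + n) = 0 := ih hle'
        obtain ⟨h1, h2⟩ := hrec (t + n + 1) (by omega) (by omega)
        have : t + n + 1 - 1 = t + n := by omega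
        rw [this, hxn] at h2
        simp only [show t + (n+1) = t + n + 1 by omega]
        nlinarith
    have := key (t₀ - t) (by omega)
    rwa [show t + (t₀ - t) = t₀ by omega] at this
  have pos : ∀ t, t ≤ t₀ → 0 < x t := by
    intro t ht
    rcases Nat.eq_zero_or_pos t with rfl | h1
    · exact hx0
    · have h0 := (hrec t h1 ht).1
      rcases h0.lt_or_eq with h | h
      · exact h
      · exact absurd (zero_prop t ht h.symm) (ne_of_gt hxt0)
  -- main induction
  have main : ∀ t, t ≤ t₀ → 1 / x 0 - 1 / x t ≤ cp * t := by
    intro t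
    induction t with
    | zero => intro _; simp
    | succ n ih =>
      intro hle
      have hle' : n ≤ t₀ := by omega
      have hn := pos n hle'
      have hn1 := pos (n + 1) (by omega)
      obtain ⟨_, h2⟩ := hrec (n + 1) (by omega) (by omega)
      simp only [Nat.add_sub_cancel] at h2
      have step : 1 / x n - 1 / x (n + 1) ≤ cp := by
        have hb : 0 < x n + cp * x n ^ 2 := by nlinarith
        have h3 : 1 / (x n + cp * x n ^ 2) ≤ 1 / x (n + 1) :=
          one_div_le_one_div_of_le hn1 h2
        have h4 : 1 / x n - 1 / (x n + cp * x n ^ 2) = cp / (1 + cp * x n) := by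
          field_simp
          ring
        have h5 : cp / (1 + cp * x n) ≤ cp := by
          rw [div_le_iff₀ (by nlinarith)]
          nlinarith [mul_nonneg (mul_nonneg hcp.le hcp.le) hn.le]
        linarith
      have := ih hle'
      push_cast
      linarith
  have := main t₀ le_rfl
  rw [div_le_iff₀ hcp]
  linarith [this]
end

section
/- Let θ ∈ ℝ, η > 0, and g ≤ 0 be real numbers, and set θ' := θ + η·g. Then σ(θ') − σ(θ) ≥ 2·η·g·σ(θ). -/
/-!
Shifting the logit by `t` multiplies the odds `exp θ / exp (-θ)` by `exp (2 t)`; for `t ≤ 0` this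
also shrinks the normaliser, so `σ (θ + t) ≥ exp (2 t) σ θ`. The tangent-line bound
`exp (2 t) ≥ 1 + 2 t` then gives `σ (θ + t) - σ θ ≥ 2 t σ θ`.
-/

open Real

/-- Two-action softmax probability with antisymmetric logits `(θ, -θ)`. -/
noncomputable def twoActionSoftmax (θ : ℝ) : ℝ :=
  Real.exp θ / (Real.exp θ + Real.exp (-θ))

lemma twoActionSoftmax_nonneg (θ : ℝ) : 0 ≤ twoActionSoftmax θ := by
  unfold twoActionSoftmax
  positivity

lemma twoActionSoftmax_add (θ t : ℝ) :
    twoActionSoftmax (θ + t) = exp (2 * t) * exp θ / (exp (2 * t) * exp θ + exp (-θ)) := by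
  have hexp : exp (2 * t) = exp t * exp t := by rw [← exp_add, two_mul]
  have hneg : exp (-(θ + t)) * exp t = exp (-θ) := by rw [← exp_add]; ring_nf
  unfold twoActionSoftmax
  rw [← mul_div_mul_right _ _ (exp_pos t).ne', add_mul, hneg, hexp, exp_add]
  ring_nf

lemma exp_two_mul_mul_twoActionSoftmax_le {t : ℝ} (ht : t ≤ 0) (θ : ℝ) :
    exp (2 * t) * twoActionSoftmax θ ≤ twoActionSoftmax (θ + t) := by
  have hle : exp (2 * t) ≤ 1 := exp_le_one_iff.mpr (by linarith)
  rw [twoActionSoftmax_add, twoActionSoftmax, ← mul_div_assoc]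
  gcongr
  nlinarith [exp_pos θ]

theorem two_mul_mul_twoActionSoftmax_le_sub {t : ℝ} (ht : t ≤ 0) (θ : ℝ) :
    2 * t * twoActionSoftmax θ ≤ twoActionSoftmax (θ + t) - twoActionSoftmax θ :=
  calc 2 * t * twoActionSoftmax θ
      ≤ (exp (2 * t) - 1) * twoActionSoftmax θ := by
        gcongr ?_ * _
        · exact twoActionSoftmax_nonneg θ
        · linarith [add_one_le_exp (2 * t)]
    _ ≤ twoActionSoftmax (θ + t) - twoActionSoftmax θ := by
        linarith [exp_two_mul_mul_twoActionSoftmax_le ht θ]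

/-- **One-step softmax change, nonpositive gradient:** for `η > 0`, `g ≤ 0` and
`θ' = θ + η g`, one has `σ(θ') − σ(θ) ≥ 2 η g σ(θ)`. -/
theorem twoActionSoftmax_step_lower_bound_of_nonpos
    (θ η g : ℝ) (hη : 0 < η) (hg : g ≤ 0) :
    2 * η * g * twoActionSoftmax θ ≤
      twoActionSoftmax (θ + η * g) - twoActionSoftmax θ := by
  rw [mul_assoc 2 η g]
  exact two_mul_mul_twoActionSoftmax_le_sub (mul_nonpos_of_nonneg_of_nonpos hη.le hg) θ
end

section
/- Let θ ∈ ℝ, η > 0, and g ∈ ℝ be real numbers with −1 ≤ 2·η·g ≤ 0, and set θ' := θ + η·g. If σ(θ') ≤ 1/2, then σ(θ') − σ(θ) ≤ (η/2)·g·σ(θ). -/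
lemma Real.exp_le_one_add_div_two {x : ℝ} (hx₁ : -1 ≤ x) (hx₂ : x ≤ 0) :
    Real.exp x ≤ 1 + x / 2 := by
  have h_inv : Real.exp x * Real.exp (-x) = 1 := by rw [← Real.exp_add]; simp
  -- `exp x = 1 / exp (-x) ≤ 1 / (1 - x) ≤ 1 + x / 2`, the last step being `x (1 + x) ≤ 0`
  nlinarith [Real.one_sub_le_exp_neg x, Real.exp_pos x, mul_nonpos_of_nonpos_of_nonneg hx₂
    (neg_le_iff_add_nonneg'.mp hx₁)]

namespace twoActionSoftmax

lemma eq_exp_two_mul_div (θ : ℝ) :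
    twoActionSoftmax θ = Real.exp (2 * θ) / (Real.exp (2 * θ) + 1) := by
  have h_inv : Real.exp θ * Real.exp (-θ) = 1 := by rw [← Real.exp_add]; simp
  rw [twoActionSoftmax, two_mul, Real.exp_add, div_eq_div_iff (by positivity) (by positivity)]
  linear_combination -Real.exp θ * h_inv

lemma nonneg (θ : ℝ) : 0 ≤ twoActionSoftmax θ := by
  unfold twoActionSoftmax; positivity

lemma add_sub_eq (θ t : ℝ) :
    twoActionSoftmax (θ + t) - twoActionSoftmax θ =
      twoActionSoftmax θ * (1 - twoActionSoftmax (θ + t)) * (Real.exp (2 * t) - 1) := by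
  have h_exp : Real.exp (2 * (θ + t)) = Real.exp (2 * θ) * Real.exp (2 * t) := by
    rw [← Real.exp_add]; ring_nf
  have hA := Real.exp_pos (2 * θ)
  have hB := Real.exp_pos (2 * t)
  simp only [eq_exp_two_mul_div, h_exp]
  field_simp
  ring

end twoActionSoftmax

theorem twoActionSoftmax_step_upper_bound_of_nonpos_general
    (θ η g : ℝ) (hg₁ : -1 ≤ 2 * η * g) (hg₂ : 2 * η * g ≤ 0)
    (hhalf : twoActionSoftmax (θ + η * g) ≤ 1 / 2) :
    twoActionSoftmax (θ + η * g) - twoActionSoftmax θ ≤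
      η / 2 * g * twoActionSoftmax θ := by
  have h_exp : Real.exp (2 * (η * g)) - 1 ≤ η * g := by
    have := Real.exp_le_one_add_div_two hg₁ hg₂
    rw [← mul_assoc]; linarith
  have h_factor : (1 - twoActionSoftmax (θ + η * g)) * (Real.exp (2 * (η * g)) - 1) ≤
      η / 2 * g := by
    nlinarith
  rw [twoActionSoftmax.add_sub_eq, mul_assoc, mul_comm (η / 2 * g)]
  exact mul_le_mul_of_nonneg_left h_factor (twoActionSoftmax.nonneg θ)

/-- **One-step softmax change, small nonpositive gradient:** for `η > 0`,
`-1 ≤ 2 η g ≤ 0` and `θ' = θ + η g`, if `σ(θ') ≤ 1/2` then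
`σ(θ') − σ(θ) ≤ (η/2) g σ(θ)`. -/
theorem twoActionSoftmax_step_upper_bound_of_nonpos
    (θ η g : ℝ) (hη : 0 < η) (hg₁ : -1 ≤ 2 * η * g) (hg₂ : 2 * η * g ≤ 0)
    (hhalf : twoActionSoftmax (θ + η * g) ≤ 1 / 2) :
    twoActionSoftmax (θ + η * g) - twoActionSoftmax θ ≤
      η / 2 * g * twoActionSoftmax θ :=
  twoActionSoftmax_step_upper_bound_of_nonpos_general θ η g hg₁ hg₂ hhalf
end

section
/- Let θ ∈ ℝ, η > 0, and g ≥ 0 be real numbers, and set θ' := θ + η·g. If σ(θ') ≤ 1/2, then σ(θ') − σ(θ) ≥ η·g·σ(θ). -/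
open Real

theorem twoActionSoftmax_eq_exp_div_cosh (θ : ℝ) :
    twoActionSoftmax θ = exp θ / (2 * cosh θ) := by
  rw [twoActionSoftmax, cosh_eq]
  ring

theorem twoActionSoftmax_le_half_iff {θ : ℝ} : twoActionSoftmax θ ≤ 1 / 2 ↔ θ ≤ 0 := by
  rw [twoActionSoftmax, div_le_iff₀ (by positivity)]
  calc exp θ ≤ 1 / 2 * (exp θ + exp (-θ))
      ↔ exp θ ≤ exp (-θ) := by constructor <;> intro h <;> linarith
    _ ↔ θ ≤ 0 := by rw [exp_le_exp]; constructor <;> intro h <;> linarith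

theorem exp_mul_twoActionSoftmax_le_of_abs_le {θ t : ℝ} (h : |θ + t| ≤ |θ|) :
    exp t * twoActionSoftmax θ ≤ twoActionSoftmax (θ + t) := by
  rw [twoActionSoftmax_eq_exp_div_cosh, twoActionSoftmax_eq_exp_div_cosh, ← mul_div_assoc,
    ← exp_add, add_comm t]
  gcongr
  exact cosh_le_cosh.mpr h

/-- **One-step softmax change, nonnegative gradient:** for `η > 0`, `g ≥ 0` and
`θ' = θ + η g`, if `σ(θ') ≤ 1/2` then `σ(θ') − σ(θ) ≥ η g σ(θ)`. -/
theorem twoActionSoftmax_step_lower_bound_of_nonneg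
    (θ η g : ℝ) (hη : 0 < η) (hg : 0 ≤ g)
    (hhalf : twoActionSoftmax (θ + η * g) ≤ 1 / 2) :
    η * g * twoActionSoftmax θ ≤
      twoActionSoftmax (θ + η * g) - twoActionSoftmax θ := by
  have ht : 0 ≤ η * g := mul_nonneg hη.le hg
  have hstep : θ + η * g ≤ 0 := twoActionSoftmax_le_half_iff.mp hhalf
  have hσ : 0 ≤ twoActionSoftmax θ := by unfold twoActionSoftmax; positivity
  have hcloser : |θ + η * g| ≤ |θ| := by
    rw [abs_of_nonpos hstep, abs_of_nonpos (by linarith)]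
    linarith
  calc η * g * twoActionSoftmax θ
      ≤ (exp (η * g) - 1) * twoActionSoftmax θ := by
        gcongr
        linarith [add_one_le_exp (η * g)]
    _ ≤ twoActionSoftmax (θ + η * g) - twoActionSoftmax θ := by
        linarith [exp_mul_twoActionSoftmax_le_of_abs_le hcloser]
end

section
/- Let 𝒜 be a finite nonempty set, θ, Q : 𝒜 → ℝ, and w ≥ 0 a real number; set V := Σ_{a∈𝒜} π_θ(a)·Q(a) and define the updated logits θ'(a) := θ(a) + w·π_θ(a)·(Q(a) − V). Let a0, a1 ∈ 𝒜 be distinct elements such that Q(a0) ≥ Q(a1), θ(a0) ≥ θ(a1), and w·|Q(a0) − V| ≤ 1. Then θ'(a0) ≥ θ'(a1); equivalently, the updated softmax policy satisfies π_{θ'}(a0) ≥ π_{θ'}(a1). -/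
open Finset

/-- Softmax policy: `π_θ(a) = exp(θ a) / ∑_{a'} exp(θ a')`. -/
noncomputable def softmaxPolicy {𝒜 : Type*} [Fintype 𝒜] (θ : 𝒜 → ℝ) (a : 𝒜) : ℝ :=
  Real.exp (θ a) / ∑ a' : 𝒜, Real.exp (θ a')

/-- Value of the softmax policy with logits `θ` under action values `Q`. -/
noncomputable def softmaxValue {𝒜 : Type*} [Fintype 𝒜] (θ Q : 𝒜 → ℝ) : ℝ :=
  ∑ a : 𝒜, softmaxPolicy θ a * Q a

/-- One-step softmax policy-gradient update of the logits, with weight `w`. -/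
noncomputable def pgUpdate {𝒜 : Type*} [Fintype 𝒜] (θ Q : 𝒜 → ℝ) (w : ℝ)
    (a : 𝒜) : ℝ :=
  θ a + w * softmaxPolicy θ a * (Q a - softmaxValue θ Q)

/-- **Order preservation under one softmax policy-gradient step:** if
`Q a₀ ≥ Q a₁`, `θ a₀ ≥ θ a₁`, `w ≥ 0` and `w · |Q a₀ − V| ≤ 1`, then after the
update `θ' a₀ ≥ θ' a₁`, and equivalently `π_{θ'}(a₀) ≥ π_{θ'}(a₁)`. -/
theorem pgUpdate_order_preserving
    {𝒜 : Type*} [Fintype 𝒜] [Nonempty 𝒜] (θ Q : 𝒜 → ℝ) (w : ℝ)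
    (a₀ a₁ : 𝒜) (hne : a₀ ≠ a₁)
    (hQ : Q a₁ ≤ Q a₀) (hθ : θ a₁ ≤ θ a₀) (hw : 0 ≤ w)
    (hsmall : w * |Q a₀ - softmaxValue θ Q| ≤ 1) :
    pgUpdate θ Q w a₁ ≤ pgUpdate θ Q w a₀ ∧
      softmaxPolicy (pgUpdate θ Q w) a₁ ≤ softmaxPolicy (pgUpdate θ Q w) a₀ := by
  set S : ℝ := ∑ a' : 𝒜, Real.exp (θ a') with hS
  have hSpos : 0 < S := Finset.sum_pos (fun i _ => Real.exp_pos _) ⟨a₀, Finset.mem_univ _⟩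
  have hE0 : Real.exp (θ a₀) ≤ S := by
    have := Finset.single_le_sum (f := fun a' => Real.exp (θ a'))
      (fun i _ => (Real.exp_pos _).le) (Finset.mem_univ a₀)
    simpa [hS] using this
  set p0 : ℝ := softmaxPolicy θ a₀ with hp0
  set p1 : ℝ := softmaxPolicy θ a₁ with hp1
  have hp1nn : 0 ≤ p1 := div_nonneg (Real.exp_pos _).le hSpos.le
  have hple : p1 ≤ p0 := by
    unfold p0 p1
    unfold softmaxPolicy
    gcongr
  have hdiff : p0 - p1 ≤ θ a₀ - θ a₁ := by
    have hexp : Real.exp (θ a₀) - Real.exp (θ a₁) ≤ Real.exp (θ a₀) * (θ a₀ - θ a₁) := by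
      have h1 : (θ a₁ - θ a₀) + 1 ≤ Real.exp (θ a₁ - θ a₀) := Real.add_one_le_exp _
      have h2 : Real.exp (θ a₁ - θ a₀) * Real.exp (θ a₀) = Real.exp (θ a₁) := by
        rw [← Real.exp_add]; ring_nf
      nlinarith [Real.exp_pos (θ a₀)]
    have : p0 - p1 = (Real.exp (θ a₀) - Real.exp (θ a₁)) / S := by
      simp [hp0, hp1, softmaxPolicy, ← hS, sub_div]
    rw [this, div_le_iff₀ hSpos]
    have hθd : 0 ≤ θ a₀ - θ a₁ := by linarith
    nlinarith [Real.exp_pos (θ a₀)]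
  set V : ℝ := softmaxValue θ Q with hV
  have habs1 : Q a₀ - V ≤ |Q a₀ - V| := le_abs_self _
  have habs2 : -(Q a₀ - V) ≤ |Q a₀ - V| := neg_le_abs _
  have habsnn : 0 ≤ |Q a₀ - V| := abs_nonneg _
  have hmain : pgUpdate θ Q w a₁ ≤ pgUpdate θ Q w a₀ := by
    simp only [pgUpdate, ← hp0, ← hp1, ← hV]
    have h1 : w * -(Q a₀ - V) ≤ 1 := le_trans (mul_le_mul_of_nonneg_left habs2 hw) hsmall
    have key : -(p0 - p1) ≤ w * (p0 - p1) * (Q a₀ - V) := by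
      nlinarith [mul_nonneg (sub_nonneg.mpr hple) (show (0:ℝ) ≤ 1 - w * -(Q a₀ - V) by linarith)]
    nlinarith [mul_nonneg (mul_nonneg hw hp1nn) (sub_nonneg.mpr hQ)]
  refine ⟨hmain, ?_⟩
  have hSpos' : 0 < ∑ a' : 𝒜, Real.exp (pgUpdate θ Q w a') :=
    Finset.sum_pos (fun i _ => Real.exp_pos _) ⟨a₀, Finset.mem_univ _⟩
  unfold softmaxPolicy
  gcongr
end

section
/- Let 𝒜 be a finite nonempty set, θ, θ' : 𝒜 → ℝ with |θ'(a) − θ(a)| ≤ 1/3 for every a ∈ 𝒜, and fix a1 ∈ 𝒜. Set M := max_{a∈𝒜} θ(a), M' := max_{a∈𝒜} θ'(a), and Δ := (θ'(a1) − θ(a1)) + (M − M'). If θ'(a1) ≥ θ(a1) and M' ≤ M, then π̂_θ(a1)·Δ ≤ π̂_{θ'}(a1) − π̂_θ(a1) ≤ 1.5·π̂_θ(a1)·Δ. -/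
/-!
Moving from `θ` to `θ'` multiplies `π̂(a₁)` by `exp Δ`, and the hypotheses confine `Δ` to
`[0, 2/3]` (the maximum drops by at most `1/3`). On that interval `1 + Δ ≤ exp Δ ≤ 1 + 3Δ/2`:
the left bound is the tangent line at `0`, the right one the chord of the convex function
`exp` over `[0, 2/3]`, valid since `exp (2/3) ≤ 2`.
-/

open Finset

/-- Rescaled policy: `π̂_θ(a) = exp(θ a − max_{a'} θ a')`. -/
noncomputable def rescaledPolicy {𝒜 : Type*} [Fintype 𝒜] [Nonempty 𝒜]
    (θ : 𝒜 → ℝ) (a : 𝒜) : ℝ :=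
  Real.exp (θ a - Finset.univ.sup' Finset.univ_nonempty θ)

namespace Real

theorem exp_le_one_add_mul_of_le {c t x : ℝ} (hc : exp c ≤ 1 + t * c) (hx₀ : 0 ≤ x)
    (hxc : x ≤ c) : exp x ≤ 1 + t * x := by
  rcases hxc.eq_or_lt with rfl | hxc
  · exact hc
  have hc₀ : 0 < c := hx₀.trans_lt hxc
  have hchord := convexOn_exp.2 (Set.mem_univ 0) (Set.mem_univ c)
    (sub_nonneg.2 ((div_le_one hc₀).2 hxc.le)) (div_nonneg hx₀ hc₀.le) (sub_add_cancel 1 (x / c))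
  have hx : x / c * c = x := div_mul_cancel₀ x hc₀.ne'
  simp only [smul_eq_mul, mul_zero, zero_add, exp_zero, mul_one, hx] at hchord
  calc exp x ≤ 1 - x / c + x / c * exp c := hchord
    _ ≤ 1 - x / c + x / c * (1 + t * c) := by gcongr
    _ = 1 + t * x := by rw [mul_add, mul_one, mul_left_comm, hx]; ring

theorem exp_two_thirds_le_two : exp (2 / 3) ≤ 2 := by
  rw [← le_log_iff_exp_le two_pos]
  linarith [log_two_gt_d9]

theorem exp_le_one_add_three_halves_mul {x : ℝ} (hx₀ : 0 ≤ x) (hx : x ≤ 2 / 3) :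
    exp x ≤ 1 + 3 / 2 * x :=
  exp_le_one_add_mul_of_le (by linarith [exp_two_thirds_le_two]) hx₀ hx

end Real

theorem Finset.sup'_le_sup'_add_of_forall_le {ι α : Type*} [SemilatticeSup α] [Add α]
    [AddRightMono α] {s : Finset ι} (hs : s.Nonempty) {f g : ι → α} {ε : α} (hfg : ∀ i ∈ s, f i ≤ g i + ε) : s.sup' hs f ≤ s.sup' hs g + ε :=
  sup'_le hs f fun i hi => (hfg i hi).trans (add_le_add_left (le_sup' g hi) ε)

theorem rescaledPolicy_eq_mul_exp {𝒜 : Type*} [Fintype 𝒜] [Nonempty 𝒜] (θ θ' : 𝒜 → ℝ)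
    (a : 𝒜) :
    rescaledPolicy θ' a = rescaledPolicy θ a *
      Real.exp ((θ' a - θ a) + (univ.sup' univ_nonempty θ - univ.sup' univ_nonempty θ')) := by
  rw [rescaledPolicy, rescaledPolicy, ← Real.exp_add]
  ring_nf

/-- **One-step change of the rescaled policy (increasing case):** if the
logits move by at most `1/3` per action, `θ' a₁ ≥ θ a₁` and
`max θ' ≤ max θ`, then with `Δ := (θ' a₁ − θ a₁) + (max θ − max θ')` one has
`π̂_θ(a₁) · Δ ≤ π̂_{θ'}(a₁) − π̂_θ(a₁) ≤ 1.5 · π̂_θ(a₁) · Δ`. -/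
theorem rescaledPolicy_step_increasing
    {𝒜 : Type*} [Fintype 𝒜] [Nonempty 𝒜] (θ θ' : 𝒜 → ℝ)
    (hclose : ∀ a : 𝒜, |θ' a - θ a| ≤ 1 / 3) (a₁ : 𝒜)
    (ha₁ : θ a₁ ≤ θ' a₁)
    (hM : Finset.univ.sup' Finset.univ_nonempty θ' ≤
      Finset.univ.sup' Finset.univ_nonempty θ) :
    rescaledPolicy θ a₁ *
        ((θ' a₁ - θ a₁) + (Finset.univ.sup' Finset.univ_nonempty θ -
          Finset.univ.sup' Finset.univ_nonempty θ')) ≤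
      rescaledPolicy θ' a₁ - rescaledPolicy θ a₁ ∧
    rescaledPolicy θ' a₁ - rescaledPolicy θ a₁ ≤
      1.5 * (rescaledPolicy θ a₁ *
        ((θ' a₁ - θ a₁) + (Finset.univ.sup' Finset.univ_nonempty θ -
          Finset.univ.sup' Finset.univ_nonempty θ'))) := by
  rw [rescaledPolicy_eq_mul_exp θ θ' a₁]
  set Δ := (θ' a₁ - θ a₁) + (univ.sup' univ_nonempty θ - univ.sup' univ_nonempty θ')
  have hπ : 0 ≤ rescaledPolicy θ a₁ := (Real.exp_pos _).le
  have hsup : univ.sup' univ_nonempty θ ≤ univ.sup' univ_nonempty θ' + 1 / 3 :=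
    sup'_le_sup'_add_of_forall_le _ fun a _ => by linarith [(abs_le.1 (hclose a)).1]
  have hΔ₀ : 0 ≤ Δ := by linarith
  have hΔ : Δ ≤ 2 / 3 := by linarith [(abs_le.1 (hclose a₁)).2]
  have hlower := mul_le_mul_of_nonneg_left (Real.add_one_le_exp Δ) hπ
  have hupper := mul_le_mul_of_nonneg_left (Real.exp_le_one_add_three_halves_mul hΔ₀ hΔ) hπ
  constructor <;> linarith
end

section
/- Let 𝒜 be a finite nonempty set, θ, θ' : 𝒜 → ℝ with |θ'(a) − θ(a)| ≤ 1/3 for every a ∈ 𝒜, and fix a1 ∈ 𝒜. Set M := max_{a∈𝒜} θ(a), M' := max_{a∈𝒜} θ'(a), and Δ := (θ'(a1) − θ(a1)) + (M − M'). If θ'(a1) ≤ θ(a1) and M' ≥ M, then π̂_θ(a1)·Δ ≤ π̂_{θ'}(a1) − π̂_θ(a1) ≤ 0.72·π̂_θ(a1)·Δ (note Δ ≤ 0 in this case). -/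
open Finset

lemma exp_twothirds_ge : (25 : ℝ) / 13 ≤ Real.exp (2 / 3) := by
  have h : (49 : ℝ) / 48 ≤ Real.exp (1 / 48) := by
    have := Real.add_one_le_exp ((1 : ℝ) / 48); linarith
  have h2 : ((49 : ℝ) / 48) ^ (32 : ℕ) ≤ Real.exp (1 / 48) ^ (32 : ℕ) :=
    pow_le_pow_left₀ (by norm_num) h 32
  rw [← Real.exp_nat_mul] at h2
  norm_num at h2
  linarith [h2]

lemma exp_neg_twothirds_le : Real.exp (-(2 / 3)) ≤ 0.52 := by
  rw [Real.exp_neg]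
  rw [inv_le_iff_one_le_mul₀ (Real.exp_pos _)]
  nlinarith [exp_twothirds_ge]

lemma key (Δ : ℝ) (h1 : -(2/3) ≤ Δ) (h2 : Δ ≤ 0) :
    Real.exp Δ - 1 ≤ 0.72 * Δ := by
  set t : ℝ := -(3 * Δ) / 2 with ht
  have ht0 : 0 ≤ t := by simp [ht]; linarith
  have ht1 : t ≤ 1 := by simp [ht]; linarith
  have hconv := convexOn_exp.2 (Set.mem_univ (-(2/3) : ℝ)) (Set.mem_univ (0 : ℝ))
    ht0 (by linarith : (0:ℝ) ≤ 1 - t) (by ring)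
  have hΔ : t • (-(2/3) : ℝ) + (1 - t) • (0:ℝ) = Δ := by
    simp [ht, smul_eq_mul]; ring
  rw [hΔ] at hconv
  simp only [smul_eq_mul, Real.exp_zero, mul_one] at hconv
  have he := exp_neg_twothirds_le
  nlinarith [mul_nonneg ht0 (by linarith : (0:ℝ) ≤ 0.52 - Real.exp (-(2/3)))]

/-- **One-step change of the rescaled policy (decreasing case):** if the
logits move by at most `1/3` per action, `θ' a₁ ≤ θ a₁` and
`max θ' ≥ max θ`, then with `Δ := (θ' a₁ − θ a₁) + (max θ − max θ')` (so
`Δ ≤ 0`) one has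
`π̂_θ(a₁) · Δ ≤ π̂_{θ'}(a₁) − π̂_θ(a₁) ≤ 0.72 · π̂_θ(a₁) · Δ`. -/
theorem rescaledPolicy_step_decreasing
    {𝒜 : Type*} [Fintype 𝒜] [Nonempty 𝒜] (θ θ' : 𝒜 → ℝ)
    (hclose : ∀ a : 𝒜, |θ' a - θ a| ≤ 1 / 3) (a₁ : 𝒜)
    (ha₁ : θ' a₁ ≤ θ a₁)
    (hM : Finset.univ.sup' Finset.univ_nonempty θ ≤
      Finset.univ.sup' Finset.univ_nonempty θ') :
    rescaledPolicy θ a₁ *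
        ((θ' a₁ - θ a₁) + (Finset.univ.sup' Finset.univ_nonempty θ -
          Finset.univ.sup' Finset.univ_nonempty θ')) ≤
      rescaledPolicy θ' a₁ - rescaledPolicy θ a₁ ∧
    rescaledPolicy θ' a₁ - rescaledPolicy θ a₁ ≤
      0.72 * (rescaledPolicy θ a₁ *
        ((θ' a₁ - θ a₁) + (Finset.univ.sup' Finset.univ_nonempty θ -
          Finset.univ.sup' Finset.univ_nonempty θ'))) := by
  set M := Finset.univ.sup' Finset.univ_nonempty θ with hMdef
  set M' := Finset.univ.sup' Finset.univ_nonempty θ' with hM'def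
  set Δ : ℝ := (θ' a₁ - θ a₁) + (M - M') with hΔdef
  have hclose1 := abs_le.mp (hclose a₁)
  have hM'le : M' ≤ M + 1/3 := by
    rw [hM'def]
    apply Finset.sup'_le
    intro a _
    have := abs_le.mp (hclose a)
    have : θ a ≤ M := Finset.le_sup' θ (Finset.mem_univ a)
    linarith [abs_le.mp (hclose a), Finset.le_sup' θ (Finset.mem_univ a)]
  have hΔ0 : Δ ≤ 0 := by rw [hΔdef]; linarith
  have hΔlb : -(2/3) ≤ Δ := by rw [hΔdef]; linarith
  have hrw : rescaledPolicy θ' a₁ = rescaledPolicy θ a₁ * Real.exp Δ := by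
    rw [rescaledPolicy, rescaledPolicy, ← Real.exp_add, ← hMdef, ← hM'def]
    rw [hΔdef]
    ring_nf
  have hpos : 0 < rescaledPolicy θ a₁ := Real.exp_pos _
  have h1 : Δ + 1 ≤ Real.exp Δ := Real.add_one_le_exp Δ
  have h2 : Real.exp Δ - 1 ≤ 0.72 * Δ := key Δ hΔlb hΔ0
  constructor
  · rw [hrw]; nlinarith
  · rw [hrw]; nlinarith
end
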